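/- Let A = {a,b,c}, m ≥ 4, p ≥ 0, q ≥ 1, and x₁, x₂, y₁, y₂ ≥ 1 with x₁ + x₂ = y₁ + y₂ = m - 3. Let w be the two-sided infinite word of period 2(p+q)+1 obtained by repeating (ab)^p a (bc)^q. Then w avoids X₂ = {a⋄^{m-2}a, b⋄^{m-2}b, c⋄^{m-2}c, a⋄^{x₁}b⋄^{x₂}b, b⋄^{y₁}b⋄^{y₂}c, a⋄^{m-2}c} if and only if (1) m ≡ 2 (mod 2(p+q)+1), (2) x₁ ≡ 2j-1 (mod 2(p+q)+1) for some j with 0 ≤ j ≤ q, and (3) y₁ ≡ 2k-1 (mod 2(p+q)+1) for some k with q ≤ k ≤ p+q+1. -/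
import Mathlib


/-- The three-letter alphabet. -/
inductive ABC | a | b | c
deriving DecidableEq
open ABC

/-- A partial word of length `m` over alphabet `A`. -/
abbrev PW (m : ℕ) (A : Type) := Fin m → Option A

/-- A two-sided infinite word `w` meets a partial word `u`. -/
def Meets {m : ℕ} {A : Type} (w : ℤ → A) (u : PW m A) : Prop :=
  ∃ i : ℤ, ∀ j : Fin m, ∀ x : A, u j = some x → w (i + (j : ℕ)) = x

/-- A set of partial words is unavoidable over `A`. -/
def Unavoidable {m : ℕ} {A : Type} (X : Set (PW m A)) : Prop :=
  ∀ w : ℤ → A, ∃ u ∈ X, Meets w u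

/-- A set of partial words is avoidable over `A`. -/
def Avoidable {m : ℕ} {A : Type} (X : Set (PW m A)) : Prop :=
  ∃ w : ℤ → A, ∀ u ∈ X, ¬ Meets w u

/-- The partial word `x ⋄^(m-2) y` of length `m`: first letter `x`, last letter `y`,
holes in between. -/
def oneHole {A : Type} (m : ℕ) (x y : A) : PW m A :=
  fun j => if (j : ℕ) = 0 then some x else if (j : ℕ) = m - 1 then some y else none

/-- The partial word `x ⋄^(p-1) d ⋄^(m-p-2) y` of length `m`: first letter `x`,
letter `d` at position `p`, last letter `y`, holes elsewhere. -/
def twoDef {A : Type} (m : ℕ) (x d y : A) (p : ℕ) : PW m A :=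
  fun j => if (j : ℕ) = 0 then some x else if (j : ℕ) = p then some d
    else if (j : ℕ) = m - 1 then some y else none

/-- The two-sided infinite word of period `P` repeating the block `f` (given on `[0, P)`). -/
def periodic {A : Type} (P : ℕ) (f : ℕ → A) : ℤ → A :=
  fun i => f ((i % (P : ℤ)).toNat)

/-! ### Auxiliary machinery -/

/-- The letter of the periodic word `(ab)^p a (bc)^q` at residue `r`. -/
def gw (p r : ℕ) : ABC := if r % 2 = 1 then b else if r ≤ 2*p then a else c

lemma gw_eq_a {p r : ℕ} : gw p r = a ↔ r % 2 = 0 ∧ r ≤ 2*p := by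
  unfold gw; split_ifs <;> simp <;> omega
lemma gw_eq_b {p r : ℕ} : gw p r = b ↔ r % 2 = 1 := by
  unfold gw; split_ifs <;> simp <;> omega
lemma gw_eq_c {p r : ℕ} : gw p r = c ↔ r % 2 = 0 ∧ 2*p < r := by
  unfold gw; split_ifs <;> simp <;> omega

lemma fg (p n : ℕ) :
    (if n < 2 * p then (if n % 2 = 0 then a else b)
     else if n = 2 * p then a
     else if (n - (2 * p + 1)) % 2 = 0 then b else c) = gw p n := by
  unfold gw; split_ifs <;> first | rfl | (exfalso; omega)

lemma mod_wrap {P r n : ℕ} (hr : r < P) (hn : n < P) :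
    (r + n) % P = if r + n < P then r + n else r + n - P := by
  split_ifs with h
  · exact Nat.mod_eq_of_lt h
  · rw [Nat.mod_eq_sub_mod (by omega)]
    exact Nat.mod_eq_of_lt (by omega)

lemma mod_shift (r n P : ℕ) : (r + n) % P = (r + n % P) % P := by
  conv_lhs => rw [Nat.add_mod]
  conv_rhs => rw [Nat.add_mod, Nat.mod_mod_of_dvd n (dvd_refl P)]

lemma rho_lt {P : ℕ} (hP : 0 < P) (i : ℤ) : (i % (P:ℤ)).toNat < P := by
  have h1 : i % (P:ℤ) < P := Int.emod_lt_of_pos _ (by exact_mod_cast hP)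
  have h0 : 0 ≤ i % (P:ℤ) := Int.emod_nonneg _ (by exact_mod_cast hP.ne')
  omega

lemma rho_add {P : ℕ} (hP : 0 < P) (i : ℤ) (n : ℕ) :
    ((i + (n:ℤ)) % (P:ℤ)).toNat = ((i % (P:ℤ)).toNat + n) % P := by
  have h0 : 0 ≤ i % (P:ℤ) := Int.emod_nonneg _ (by exact_mod_cast hP.ne')
  have h1 : (i + (n:ℤ)) % (P:ℤ) = ((i % (P:ℤ)) + n) % P :=
    (Int.emod_add_emod i (P:ℤ) (n:ℤ)).symm
  rw [h1, ← Int.toNat_of_nonneg h0, ← Nat.cast_add, ← Int.natCast_mod, Int.toNat_natCast,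
    Int.toNat_natCast]

lemma rcast {P r : ℕ} (hr : r < P) : (((r:ℤ)) % (P:ℤ)).toNat = r := by
  rw [← Int.natCast_mod, Int.toNat_natCast, Nat.mod_eq_of_lt hr]

/-- The periodic word as a function of residues. -/
def Wd (P pp : ℕ) : ℤ → ABC := fun i => gw pp ((i % (P:ℤ)).toNat)

lemma Wd_apply (P pp : ℕ) (i : ℤ) : Wd P pp i = gw pp ((i % (P:ℤ)).toNat) := rfl

lemma meets_oneHole_iff {A : Type} {m : ℕ} (hm : 2 ≤ m) (w : ℤ → A) (x y : A) :
    Meets w (oneHole m x y) ↔ ∃ i : ℤ, w i = x ∧ w (i + ((m-1 : ℕ) : ℤ)) = y := by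
  constructor
  · rintro ⟨i, h⟩
    refine ⟨i, ?_, ?_⟩
    · have := h ⟨0, by omega⟩ x (by simp [oneHole])
      simpa using this
    · have h0 : m - 1 ≠ 0 := by omega
      have := h ⟨m-1, by omega⟩ y (by simp [oneHole, h0])
      simpa using this
  · rintro ⟨i, h1, h2⟩
    refine ⟨i, ?_⟩
    intro j z hz
    simp only [oneHole] at hz
    split_ifs at hz with e0 e1
    · injection hz with hz; subst hz; rw [e0]; simpa using h1
    · injection hz with hz; subst hz; rw [e1]; exact h2

lemma meets_twoDef_iff {A : Type} {m pp : ℕ} (hp0 : 0 < pp) (hpm : pp < m - 1)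
    (w : ℤ → A) (x d y : A) :
    Meets w (twoDef m x d y pp) ↔
      ∃ i : ℤ, w i = x ∧ w (i + (pp : ℤ)) = d ∧ w (i + ((m-1 : ℕ) : ℤ)) = y := by
  constructor
  · rintro ⟨i, h⟩
    refine ⟨i, ?_, ?_, ?_⟩
    · have := h ⟨0, by omega⟩ x (by simp [twoDef])
      simpa using this
    · have e0 : pp ≠ 0 := by omega
      have := h ⟨pp, by omega⟩ d (by simp [twoDef, e0])
      simpa using this
    · have e0 : m - 1 ≠ 0 := by omega
      have e1 : m - 1 ≠ pp := by omega
      have := h ⟨m-1, by omega⟩ y (by simp [twoDef, e0, e1])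
      simpa using this
  · rintro ⟨i, h1, h2, h3⟩
    refine ⟨i, ?_⟩
    intro j z hz
    simp only [twoDef] at hz
    split_ifs at hz with e0 e1 e2
    · injection hz with hz; subst hz; rw [e0]; simpa using h1
    · injection hz with hz; subst hz; rw [e1]; exact h2
    · injection hz with hz; subst hz; rw [e2]; exact h3

lemma not_meets_oneHole (P pp m : ℕ) (hP : 0 < P) (hm : 2 ≤ m) (x y : ABC) :
    (¬ Meets (Wd P pp) (oneHole m x y)) ↔
      (∀ r : ℕ, ¬(r < P ∧ gw pp r = x ∧ gw pp ((r + (m-1) % P) % P) = y)) := by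
  rw [meets_oneHole_iff hm]
  constructor
  · rintro h r ⟨hr, h1, h2⟩
    refine h ⟨(r:ℤ), ?_, ?_⟩
    · rw [Wd_apply, rcast hr]; exact h1
    · rw [Wd_apply, rho_add hP, rcast hr, mod_shift]; exact h2
  · rintro h ⟨i, h1, h2⟩
    apply h ((i % (P:ℤ)).toNat)
    refine ⟨rho_lt hP i, h1, ?_⟩
    rw [Wd_apply, rho_add hP, mod_shift] at h2
    exact h2
lemma not_meets_twoDef (P pp m s : ℕ) (hP : 0 < P) (hs0 : 0 < s) (hsm : s < m - 1)
    (x d y : ABC) :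
    (¬ Meets (Wd P pp) (twoDef m x d y s)) ↔
      (∀ r : ℕ, ¬(r < P ∧ gw pp r = x ∧ gw pp ((r + s % P) % P) = d ∧
        gw pp ((r + (m-1) % P) % P) = y)) := by
  rw [meets_twoDef_iff hs0 hsm]
  constructor
  · rintro h r ⟨hr, h1, h2, h3⟩
    refine h ⟨(r:ℤ), ?_, ?_, ?_⟩
    · rw [Wd_apply, rcast hr]; exact h1
    · rw [Wd_apply, rho_add hP, rcast hr, mod_shift]; exact h2
    · rw [Wd_apply, rho_add hP, rcast hr, mod_shift]; exact h3
  · rintro h ⟨i, h1, h2, h3⟩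
    apply h ((i % (P:ℤ)).toNat)
    refine ⟨rho_lt hP i, h1, ?_, ?_⟩
    · rw [Wd_apply, rho_add hP, mod_shift] at h2; exact h2
    · rw [Wd_apply, rho_add hP, mod_shift] at h3; exact h3
lemma coreOne (p q t : ℕ) (hq : 1 ≤ q) (ht : t < 2*(p+q)+1) :
    ((∀ r : ℕ, ¬(r < 2*(p+q)+1 ∧ gw p r = a ∧ gw p ((r+t) % (2*(p+q)+1)) = a)) ∧
     (∀ r : ℕ, ¬(r < 2*(p+q)+1 ∧ gw p r = b ∧ gw p ((r+t) % (2*(p+q)+1)) = b)) ∧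
     (∀ r : ℕ, ¬(r < 2*(p+q)+1 ∧ gw p r = c ∧ gw p ((r+t) % (2*(p+q)+1)) = c)) ∧
     (∀ r : ℕ, ¬(r < 2*(p+q)+1 ∧ gw p r = a ∧ gw p ((r+t) % (2*(p+q)+1)) = c))) ↔ t = 1 := by
  constructor
  · rintro ⟨h1, h2, h3, h6⟩
    by_contra hne
    by_cases h0 : t = 0
    · apply h1 0
      have e : (0 + t) % (2*(p+q)+1) = 0 := by subst h0; simp
      rw [e]
      refine ⟨by omega, ?_, ?_⟩ <;> (rw [gw_eq_a]; try omega)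
    by_cases hodd : t % 2 = 1
    · -- t odd, t ≥ 3
      apply h2 (2*(p+q)+1 - t + 1)
      have e : (2*(p+q)+1 - t + 1 + t) % (2*(p+q)+1) = 1 := by
        rw [show 2*(p+q)+1 - t + 1 + t = (2*(p+q)+1) + 1 by omega, Nat.add_mod_left]
        exact Nat.mod_eq_of_lt (by omega)
      rw [e]
      refine ⟨by omega, ?_, ?_⟩ <;> (rw [gw_eq_b]; try omega)
    by_cases hlast : t = 2*(p+q)
    · apply h6 0
      have e : (0 + t) % (2*(p+q)+1) = 2*(p+q) := by
        rw [Nat.zero_add, hlast]; exact Nat.mod_eq_of_lt (by omega)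
      rw [e]
      exact ⟨by omega, by rw [gw_eq_a]; try omega, by rw [gw_eq_c]; try omega⟩
    · apply h2 1
      have e : (1 + t) % (2*(p+q)+1) = 1 + t := Nat.mod_eq_of_lt (by omega)
      rw [e]
      refine ⟨by omega, ?_, ?_⟩ <;> (rw [gw_eq_b]; try omega)
  · rintro rfl
    refine ⟨?_, ?_, ?_, ?_⟩ <;> rintro r ⟨hr, hx, hy⟩
    · rw [gw_eq_a] at hx; rw [gw_eq_a] at hy
      rw [mod_wrap hr (by omega)] at hy
      split_ifs at hy <;> omega
    · rw [gw_eq_b] at hx; rw [gw_eq_b] at hy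
      rw [mod_wrap hr (by omega)] at hy
      split_ifs at hy <;> omega
    · rw [gw_eq_c] at hx; rw [gw_eq_c] at hy
      rw [mod_wrap hr (by omega)] at hy
      split_ifs at hy <;> omega
    · rw [gw_eq_a] at hx; rw [gw_eq_c] at hy
      rw [mod_wrap hr (by omega)] at hy
      split_ifs at hy <;> omega

lemma core4 (p q u : ℕ) (hq : 1 ≤ q) (hu : u < 2*(p+q)+1) :
    (∀ r : ℕ, ¬(r < 2*(p+q)+1 ∧ gw p r = a ∧ gw p ((r+u) % (2*(p+q)+1)) = b ∧
        gw p ((r+1) % (2*(p+q)+1)) = b)) ↔ (u % 2 = 0 ∧ u ≤ 2*q) := by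
  constructor
  · intro h
    by_contra hcon
    by_cases he : u % 2 = 0
    · apply h (2*p)
      have e1 : (2*p + u) % (2*(p+q)+1) = 2*p + u - (2*(p+q)+1) := by
        rw [mod_wrap (by omega) hu, if_neg (by omega)]
      have e2 : (2*p + 1) % (2*(p+q)+1) = 2*p+1 := Nat.mod_eq_of_lt (by omega)
      rw [e1, e2]
      refine ⟨by omega, by rw [gw_eq_a]; try omega, by rw [gw_eq_b]; try omega, by rw [gw_eq_b]; try omega⟩
    · apply h 0
      have e1 : (0 + u) % (2*(p+q)+1) = u := by rw [Nat.zero_add]; exact Nat.mod_eq_of_lt hu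
      have e2 : (0 + 1) % (2*(p+q)+1) = 1 := by rw [Nat.zero_add]; exact Nat.mod_eq_of_lt (by omega)
      rw [e1, e2]
      refine ⟨by omega, by rw [gw_eq_a]; try omega, by rw [gw_eq_b]; try omega, by rw [gw_eq_b]; try omega⟩
  · rintro ⟨he, hle⟩ r ⟨hr, ha1, hb1, _⟩
    rw [gw_eq_a] at ha1; rw [gw_eq_b] at hb1
    rw [mod_wrap hr hu] at hb1
    split_ifs at hb1 <;> omega

lemma core5 (p q v : ℕ) (hq : 1 ≤ q) (hv : v < 2*(p+q)+1) :
    (∀ r : ℕ, ¬(r < 2*(p+q)+1 ∧ gw p r = b ∧ gw p ((r+v) % (2*(p+q)+1)) = b ∧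
        gw p ((r+1) % (2*(p+q)+1)) = c)) ↔ (v = 1 ∨ (v % 2 = 0 ∧ 2*q ≤ v)) := by
  constructor
  · intro h
    by_contra hcon
    push_neg at hcon
    obtain ⟨hv1, hcon⟩ := hcon
    have e2 : (2*p + 1 + 1) % (2*(p+q)+1) = 2*p+2 := Nat.mod_eq_of_lt (by omega)
    by_cases he : v % 2 = 0
    · -- v even, v < 2q
      have hlt : v < 2*q := by omega
      apply h (2*p+1)
      have e1 : (2*p+1 + v) % (2*(p+q)+1) = 2*p+1+v := Nat.mod_eq_of_lt (by omega)
      rw [e1, e2]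
      refine ⟨by omega, by rw [gw_eq_b]; try omega, by rw [gw_eq_b]; try omega, by rw [gw_eq_c]; try omega⟩
    · by_cases hv2 : v ≤ 2*q
      · -- v odd, 3 ≤ v ≤ 2q
        apply h (2*(p+q)+2-v)
        have e1 : (2*(p+q)+2-v + v) % (2*(p+q)+1) = 1 := by
          rw [show 2*(p+q)+2-v + v = (2*(p+q)+1) + 1 by omega, Nat.add_mod_left]
          exact Nat.mod_eq_of_lt (by omega)
        have e3 : (2*(p+q)+2-v + 1) % (2*(p+q)+1) = 2*(p+q)+2-v+1 := Nat.mod_eq_of_lt (by omega)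
        rw [e1, e3]
        refine ⟨by omega, by rw [gw_eq_b]; try omega, by rw [gw_eq_b]; try omega, by rw [gw_eq_c]; try omega⟩
      · -- v odd, v > 2q
        apply h (2*p+1)
        have e1 : (2*p+1 + v) % (2*(p+q)+1) = v - 2*q := by
          rw [mod_wrap (by omega) hv, if_neg (by omega)]; omega
        rw [e1, e2]
        refine ⟨by omega, by rw [gw_eq_b]; try omega, by rw [gw_eq_b]; try omega, by rw [gw_eq_c]; try omega⟩
  · rintro hcond r ⟨hr, hb1, hb2, hc1⟩
    rw [gw_eq_b] at hb1; rw [gw_eq_b] at hb2; rw [gw_eq_c] at hc1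
    rw [mod_wrap hr hv] at hb2
    rw [mod_wrap hr (by omega)] at hc1
    rcases hcond with rfl | ⟨he, hge⟩
    · split_ifs at hb2 hc1 <;> omega
    · split_ifs at hb2 hc1 <;> omega
-- helper: shift a nat congruence statement
lemma natmod_iff {a b n : ℕ} (hb : b < n) : a % n = b ↔ (a:ℤ) ≡ (b:ℤ) [ZMOD (n:ℕ)] := by
  rw [Int.natCast_modEq_iff]
  unfold Nat.ModEq
  rw [Nat.mod_eq_of_lt hb]

lemma cond1 (m p q : ℕ) (hm : 4 ≤ m) (hq : 1 ≤ q) :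
    ((m : ℤ) ≡ 2 [ZMOD (2 * (p + q) + 1 : ℕ)]) ↔ (m-1) % (2*(p+q)+1) = 1 := by
  rw [natmod_iff (by omega)]
  constructor
  · intro h
    have h2 := h.sub_right 1
    have e : ((m-1:ℕ):ℤ) = (m:ℤ) - 1 := by push_cast [Nat.cast_sub (by omega : 1 ≤ m)]; ring
    rw [e]
    simpa using h2
  · intro h
    have h2 := h.add_right 1
    have e : ((m-1:ℕ):ℤ) = (m:ℤ) - 1 := by push_cast [Nat.cast_sub (by omega : 1 ≤ m)]; ring
    rw [e] at h2
    simpa using h2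

lemma cond2 (x₁ p q : ℕ) (hq : 1 ≤ q) :
    (∃ j : ℕ, j ≤ q ∧ (x₁ : ℤ) ≡ 2 * (j : ℤ) - 1 [ZMOD (2 * (p + q) + 1 : ℕ)]) ↔
      ((x₁+1) % (2*(p+q)+1)) % 2 = 0 ∧ (x₁+1) % (2*(p+q)+1) ≤ 2*q := by
  constructor
  · rintro ⟨j, hj, hc⟩
    have h2 := hc.add_right 1
    have e : ((x₁+1:ℕ):ℤ) = (x₁:ℤ) + 1 := by push_cast; ring
    have h3 : ((x₁+1:ℕ):ℤ) ≡ ((2*j:ℕ):ℤ) [ZMOD ((2*(p+q)+1 : ℕ):ℤ)] := by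
      rw [e]; push_cast; simpa using h2
    have h4 : (x₁+1) % (2*(p+q)+1) = (2*j) % (2*(p+q)+1) := Int.natCast_modEq_iff.mp h3
    rw [h4, Nat.mod_eq_of_lt (show 2*j < 2*(p+q)+1 by omega)]
    omega
  · rintro ⟨he, hle⟩
    set u := (x₁+1) % (2*(p+q)+1) with hu
    refine ⟨u/2, by omega, ?_⟩
    have h3 : (x₁+1) % (2*(p+q)+1) = 2*(u/2) % (2*(p+q)+1) := by
      rw [Nat.mod_eq_of_lt (by omega : 2*(u/2) < 2*(p+q)+1)]
      omega
    have h4 := Int.natCast_modEq_iff.mpr h3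
    have h5 := h4.sub_right 1
    have e : ((x₁+1:ℕ):ℤ) - 1 = (x₁:ℤ) := by push_cast; ring
    rw [e] at h5
    have e2 : ((2*(u/2):ℕ):ℤ) - 1 = 2*((u/2 : ℕ):ℤ) - 1 := by push_cast; ring
    rw [e2] at h5
    exact h5

lemma cond3 (y₁ p q : ℕ) (hq : 1 ≤ q) :
    (∃ k : ℕ, q ≤ k ∧ k ≤ p + q + 1 ∧ (y₁ : ℤ) ≡ 2 * (k : ℤ) - 1 [ZMOD (2 * (p + q) + 1 : ℕ)]) ↔
      ((y₁+1) % (2*(p+q)+1) = 1 ∨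
       (((y₁+1) % (2*(p+q)+1)) % 2 = 0 ∧ 2*q ≤ (y₁+1) % (2*(p+q)+1))) := by
  constructor
  · rintro ⟨k, hk1, hk2, hc⟩
    have h2 := hc.add_right 1
    have e : ((y₁+1:ℕ):ℤ) = (y₁:ℤ) + 1 := by push_cast; ring
    have h3 : ((y₁+1:ℕ):ℤ) ≡ ((2*k:ℕ):ℤ) [ZMOD ((2*(p+q)+1 : ℕ):ℤ)] := by
      rw [e]; push_cast; simpa using h2
    have h4 : (y₁+1) % (2*(p+q)+1) = (2*k) % (2*(p+q)+1) := Int.natCast_modEq_iff.mp h3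
    by_cases hk : k ≤ p + q
    · right
      rw [h4, Nat.mod_eq_of_lt (show 2*k < 2*(p+q)+1 by omega)]
      omega
    · left
      have hk' : k = p + q + 1 := by omega
      rw [h4, hk', show 2*(p+q+1) = (2*(p+q)+1) + 1 by ring, Nat.add_mod_left]
      exact Nat.mod_eq_of_lt (by omega)
  · intro hcond
    set v := (y₁+1) % (2*(p+q)+1) with hv
    have hvlt : v < 2*(p+q)+1 := Nat.mod_lt _ (by omega)
    -- choose k
    obtain ⟨k, hk1, hk2, hmod⟩ : ∃ k : ℕ, q ≤ k ∧ k ≤ p + q + 1 ∧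
        (y₁+1) % (2*(p+q)+1) = (2*k) % (2*(p+q)+1) := by
      rcases hcond with h1 | ⟨he, hge⟩
      · refine ⟨p+q+1, by omega, le_refl _, ?_⟩
        rw [show 2*(p+q+1) = (2*(p+q)+1) + 1 by ring, Nat.add_mod_left, ← hv, h1]
        exact (Nat.mod_eq_of_lt (by omega)).symm
      · refine ⟨v/2, by omega, by omega, ?_⟩
        rw [Nat.mod_eq_of_lt (by omega : 2*(v/2) < 2*(p+q)+1), ← hv]
        omega
    have h4 := Int.natCast_modEq_iff.mpr hmod
    have h5 := h4.sub_right 1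
    have e : ((y₁+1:ℕ):ℤ) - 1 = (y₁:ℤ) := by push_cast; ring
    rw [e] at h5
    have e2 : ((2*k:ℕ):ℤ) - 1 = 2*((k : ℕ):ℤ) - 1 := by push_cast; ring
    rw [e2] at h5
    exact ⟨k, hk1, hk2, h5⟩

/-- The word repeating (ab)^p a (bc)^q avoids
X₂ = {a⋄^(m-2)a, b⋄^(m-2)b, c⋄^(m-2)c, a⋄^(x₁)b⋄^(x₂)b, b⋄^(y₁)b⋄^(y₂)c, a⋄^(m-2)c}
iff m ≡ 2, x₁ ≡ 2j-1 (some 0 ≤ j ≤ q), and y₁ ≡ 2k-1 (some q ≤ k ≤ p+q+1),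
all modulo 2(p+q)+1. -/
theorem stmt_9 (m x₁ x₂ y₁ y₂ p q : ℕ) (hm : 4 ≤ m) (hq : 1 ≤ q)
    (hx₁ : 1 ≤ x₁) (hx₂ : 1 ≤ x₂) (hy₁ : 1 ≤ y₁) (hy₂ : 1 ≤ y₂)
    (hsx : x₁ + x₂ = m - 3) (hsy : y₁ + y₂ = m - 3) :
    (∀ u ∈ ({oneHole m a a, oneHole m b b, oneHole m c c,
             twoDef m a b b (x₁ + 1), twoDef m b b c (y₁ + 1),
             oneHole m a c} : Set (PW m ABC)),
      ¬ Meets (periodic (2 * (p + q) + 1) (fun n =>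
        if n < 2 * p then (if n % 2 = 0 then a else b)
        else if n = 2 * p then a
        else if (n - (2 * p + 1)) % 2 = 0 then b else c)) u) ↔
    ((m : ℤ) ≡ 2 [ZMOD (2 * (p + q) + 1 : ℕ)] ∧
     (∃ j : ℕ, j ≤ q ∧ (x₁ : ℤ) ≡ 2 * (j : ℤ) - 1 [ZMOD (2 * (p + q) + 1 : ℕ)]) ∧
     (∃ k : ℕ, q ≤ k ∧ k ≤ p + q + 1 ∧
        (y₁ : ℤ) ≡ 2 * (k : ℤ) - 1 [ZMOD (2 * (p + q) + 1 : ℕ)])) := by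
  have hP : 0 < 2*(p+q)+1 := by omega
  have hweq : (periodic (2 * (p + q) + 1) (fun n =>
        if n < 2 * p then (if n % 2 = 0 then a else b)
        else if n = 2 * p then a
        else if (n - (2 * p + 1)) % 2 = 0 then b else c)) = Wd (2*(p+q)+1) p := by
    funext i
    exact fg p _
  rw [hweq]
  simp only [Set.mem_insert_iff, Set.mem_singleton_iff, forall_eq_or_imp, forall_eq]
  rw [not_meets_oneHole (2*(p+q)+1) p m hP (by omega),
      not_meets_oneHole (2*(p+q)+1) p m hP (by omega),
      not_meets_oneHole (2*(p+q)+1) p m hP (by omega),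
      not_meets_twoDef (2*(p+q)+1) p m (x₁+1) hP (by omega) (by omega),
      not_meets_twoDef (2*(p+q)+1) p m (y₁+1) hP (by omega) (by omega),
      not_meets_oneHole (2*(p+q)+1) p m hP (by omega),
      cond1 m p q hm hq, cond2 x₁ p q hq, cond3 y₁ p q hq]
  have ht : (m-1) % (2*(p+q)+1) < 2*(p+q)+1 := Nat.mod_lt _ hP
  have hu : (x₁+1) % (2*(p+q)+1) < 2*(p+q)+1 := Nat.mod_lt _ hP
  have hv : (y₁+1) % (2*(p+q)+1) < 2*(p+q)+1 := Nat.mod_lt _ hP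
  constructor
  · rintro ⟨c1, c2, c3, c4, c5, c6⟩
    have ht1 := (coreOne p q _ hq ht).mp ⟨c1, c2, c3, c6⟩
    rw [ht1] at c4 c5
    exact ⟨ht1, (core4 p q _ hq hu).mp c4, (core5 p q _ hq hv).mp c5⟩
  · rintro ⟨ht1, hX, hY⟩
    obtain ⟨c1, c2, c3, c6⟩ := (coreOne p q _ hq ht).mpr ht1
    refine ⟨c1, c2, c3, ?_, ?_, c6⟩
    · rw [ht1]
      exact (core4 p q _ hq hu).mpr hX
    · rw [ht1]
      exact (core5 p q _ hq hv).mpr hY
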